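/- arXiv:1709.06502 — 9 statements merged into one kernel-verified Lean document; each statement's English description precedes it below -/
import Mathlib

section
/- Let G be an ℓ-group (not necessarily abelian) with strong unit u, R a Riesz space with strong unit 1_R, and s : G → R a map satisfying: s(g) ≥ 0 for g ≥ 0, s(g+h) = s(g) + s(h) for all g, h, and s(u) = 1_R. Then Ker(s) := {x ∈ G : s(|x|) = 0} is a normal convex ℓ-subgroup (ℓ-ideal) of G. -/
/-!
A positive additive map `f` is monotone, so `{x | f |x| = 0}` is convex, and it is closed under
addition because `|x + y| ≤ |x| + |y| + |x|` holds in every ℓ-group. Conjugation commutes with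
`|·|`, and `f (g + |x| + -g) = f |x|` because `R` is commutative.
-/

section LatticeOrderedGroup

variable {G : Type*} [Lattice G] [AddGroup G] [AddLeftMono G] [AddRightMono G]

theorem sup_zero_add_neg_inf_zero (x : G) : x ⊔ 0 + -(x ⊓ 0) = |x| := by
  rw [neg_inf, neg_zero, ← negPart_def]
  exact posPart_add_negPart x

-- Without commutativity `|x + y| ≤ |x| + |y|` fails; the extra `|x|` absorbs `-(x + y) = -y + -x`.
theorem abs_add_le_abs_add_abs_add_abs (x y : G) : |x + y| ≤ |x| + |y| + |x| := by
  rw [abs_le']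
  constructor
  · calc x + y ≤ |x| + |y| := add_le_add (le_abs_self x) (le_abs_self y)
      _ ≤ |x| + |y| + |x| := le_add_of_nonneg_right (abs_nonneg x)
  · calc -(x + y) = -y + -x := neg_add_rev x y
      _ ≤ |y| + |x| := add_le_add (neg_le_abs y) (neg_le_abs x)
      _ ≤ |x| + (|y| + |x|) := le_add_of_nonneg_left (abs_nonneg x)
      _ = |x| + |y| + |x| := (add_assoc _ _ _).symm

theorem abs_add_add_neg (g x : G) : |g + x + -g| = g + |x| + -g := by
  have hneg : -(g + x + -g) = g + -x + -g := by
    rw [neg_add_rev, neg_neg, neg_add_rev, ← add_assoc]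
  rw [abs, abs, hneg, add_sup, sup_add]

end LatticeOrderedGroup

namespace AddMonoidHom

theorem monotone_of_map_nonneg {G R : Type*} [AddGroup G] [Preorder G] [AddLeftMono G]
    [AddMonoid R] [Preorder R] [AddLeftMono R] (f : G →+ R) (hf : ∀ g, 0 ≤ g → 0 ≤ f g) :
    Monotone f := fun a b hab => by
  have hb : f b = f a + f (-a + b) := by rw [← map_add, add_neg_cancel_left]
  rw [hb]
  exact le_add_of_nonneg_right (hf _ (le_neg_add_iff_le.mpr hab))

theorem map_eq_zero_of_nonneg_of_le {G R : Type*} [AddZeroClass G] [Preorder G] [AddZeroClass R]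
    [PartialOrder R] {f : G →+ R} (hf : Monotone f) {x y : G} (hy : 0 ≤ y) (hyx : y ≤ x)
    (hx : f x = 0) : f y = 0 :=
  le_antisymm (hx ▸ hf hyx) (map_zero f ▸ hf hy)

variable {G R : Type*} [AddGroup G] [AddCommMonoid R]

theorem map_add_add_neg (f : G →+ R) (g x : G) : f (g + x + -g) = f x := by
  rw [map_add, map_add, add_right_comm, ← map_add, add_neg_cancel, map_zero, zero_add]

section Ordered

variable [Lattice G] [AddLeftMono G] [AddRightMono G] [PartialOrder R]
  {f : G →+ R} (hf : Monotone f) {x y : G}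
include hf

theorem map_abs_eq_zero_of_abs_le (hyx : |y| ≤ |x|) (hx : f |x| = 0) : f |y| = 0 :=
  map_eq_zero_of_nonneg_of_le hf (abs_nonneg y) hyx hx

theorem map_abs_add_eq_zero (hx : f |x| = 0) (hy : f |y| = 0) : f |x + y| = 0 :=
  map_eq_zero_of_nonneg_of_le hf (abs_nonneg _) (abs_add_le_abs_add_abs_add_abs x y)
    (by rw [map_add, map_add, hx, hy, add_zero, add_zero])

end Ordered

end AddMonoidHom

theorem kernel_is_normal_ell_ideal_general
    {G R : Type*}
    [Lattice G] [AddGroup G]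
    [CovariantClass G G (· + ·) (· ≤ ·)]
    [CovariantClass G G (Function.swap (· + ·)) (· ≤ ·)]
    [Lattice R] [AddCommGroup R] [CovariantClass R R (· + ·) (· ≤ ·)]
    (s : G → R)
    (hpos : ∀ g : G, 0 ≤ g → 0 ≤ s g)
    (hadd : ∀ g h : G, s (g + h) = s g + s h) :
    let K : Set G := {x | s ((x ⊔ 0) + -(x ⊓ 0)) = 0}
    (0 : G) ∈ K ∧
    (∀ x ∈ K, -x ∈ K) ∧
    (∀ x ∈ K, ∀ y ∈ K, x + y ∈ K) ∧
    (∀ x ∈ K, ∀ y : G, (y ⊔ 0) + -(y ⊓ 0) ≤ (x ⊔ 0) + -(x ⊓ 0) → y ∈ K) ∧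
    (∀ g : G, ∀ x ∈ K, g + x + -g ∈ K) := by
  intro K
  let f : G →+ R := AddMonoidHom.mk' s hadd
  have hf : Monotone f := f.monotone_of_map_nonneg hpos
  have hK : ∀ x, x ∈ K ↔ f |x| = 0 := fun x => by
    rw [← sup_zero_add_neg_inf_zero]
    exact Iff.rfl
  simp only [hK, sup_zero_add_neg_inf_zero]
  refine ⟨by simp, fun x hx => by rwa [abs_neg], fun x hx y hy => f.map_abs_add_eq_zero hf hx hy,
    fun x hx y hyx => f.map_abs_eq_zero_of_abs_le hf hyx hx, fun g x hx => ?_⟩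
  rwa [abs_add_add_neg, f.map_add_add_neg]

/-- The kernel `{x : s(|x|) = 0}` of an additive positive unit-preserving
map from a (not necessarily abelian) unital ℓ-group to a unital Riesz space is a normal
convex ℓ-subgroup (ℓ-ideal).  Here `|x| = (x ∨ 0) + (-(x ∧ 0))`. -/
theorem kernel_is_normal_ell_ideal
    {G R : Type*}
    [Lattice G] [AddGroup G]
    [CovariantClass G G (· + ·) (· ≤ ·)]
    [CovariantClass G G (Function.swap (· + ·)) (· ≤ ·)]
    [Lattice R] [AddCommGroup R] [CovariantClass R R (· + ·) (· ≤ ·)]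
    [Module ℝ R] [PosSMulMono ℝ R]
    (u : G) (hu : 0 ≤ u) (hustrong : ∀ g : G, ∃ n : ℕ, 1 ≤ n ∧ g ≤ n • u)
    (oneR : R) (honeR : 0 ≤ oneR)
    (hRstrong : ∀ r : R, ∃ n : ℕ, 1 ≤ n ∧ r ≤ n • oneR)
    (s : G → R)
    (hpos : ∀ g : G, 0 ≤ g → 0 ≤ s g)
    (hadd : ∀ g h : G, s (g + h) = s g + s h)
    (hunit : s u = oneR) :
    let K : Set G := {x | s ((x ⊔ 0) + -(x ⊓ 0)) = 0}
    (0 : G) ∈ K ∧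
    (∀ x ∈ K, -x ∈ K) ∧
    (∀ x ∈ K, ∀ y ∈ K, x + y ∈ K) ∧
    (∀ x ∈ K, ∀ y : G, (y ⊔ 0) + -(y ⊓ 0) ≤ (x ⊔ 0) + -(x ⊓ 0) → y ∈ K) ∧
    (∀ g : G, ∀ x ∈ K, g + x + -g ∈ K) :=
  kernel_is_normal_ell_ideal_general s hpos hadd
end

section
/- Let s be an (R, 1_R)-state on a pseudo MV-algebra M (an additive unit-preserving map into [0, 1_R]). Then s is an (R, 1_R)-state-morphism (a homomorphism of pseudo MV-algebras into Γ(R, 1_R)) if and only if s(x ∧ y) = s(x) ∧ s(y) for all x, y in M. -/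
/-!
A state is additive on `Γ(G, u)`, so it automatically preserves `0` and both negations; the
remaining question is `⊕` versus `∧`. Each is expressed through the other by an identity that
holds in every ℓ-group, hence both in `G` and, for the values of `s`, in `R`:
`x ⊕ y = x + (x~ ∧ y)` turns `∧`-preservation into `⊕`-preservation, and
`x ∧ y = ((x⁻ ⊕ y)⁻ ⊕ x⁻)~` (for `x, y ≥ 0`) turns a morphism into an `∧`-preserving map.
-/

open Set

theorem map_zero_of_additive {G R : Type*} [AddZeroClass G] [Preorder G] [AddGroup R]
    {u : G} {s : G → R} (hu : 0 ≤ u)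
    (hadd : ∀ x y : G, 0 ≤ x → 0 ≤ y → x + y ≤ u → s (x + y) = s x + s y) : s 0 = 0 := by
  simpa using hadd 0 0 le_rfl le_rfl (by simpa using hu)

section LatticeOrderedGroup

variable {G : Type*} [Lattice G] [AddGroup G] [CovariantClass G G (· + ·) (· ≤ ·)]

theorem add_inf_eq_add_neg_add_inf (u x y : G) : (x + y) ⊓ u = x + (-x + u) ⊓ y := by
  rw [add_inf, add_neg_cancel_left, inf_comm]

theorem add_inf_mem_Icc {u x y : G} (hx : x ∈ Icc 0 u) (hy : y ∈ Icc 0 u) :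
    (x + y) ⊓ u ∈ Icc 0 u :=
  ⟨le_inf (add_nonneg hx.1 hy.1) (hx.1.trans hx.2), inf_le_right⟩

variable [CovariantClass G G (Function.swap (· + ·)) (· ≤ ·)]

/-- `x ∧ y = ((x⁻ ⊕ y)⁻ ⊕ x⁻)~` in `Γ(G, u)`. -/
theorem inf_eq_mv_term (u : G) {x y : G} (hx : 0 ≤ x) (hy : 0 ≤ y) :
    x ⊓ y = -((u + -((u + -x + y) ⊓ u) + (u + -x)) ⊓ u) + u := by
  have hz : x + -u + (u + -x + y) ⊓ u = y ⊓ x := by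
    rw [add_inf]
    congr 1 <;> simp [add_assoc]
  have hneg : -(u + -((u + -x + y) ⊓ u) + (u + -x)) + u = x + -u + (u + -x + y) ⊓ u := by
    simp [neg_add_rev, add_assoc]
  rw [neg_inf, sup_add, hneg, hz, neg_add_cancel, sup_eq_left.2 (le_inf hy hx), inf_comm]

theorem add_neg_mem_Icc {u x : G} (hx : x ∈ Icc 0 u) : u + -x ∈ Icc 0 u :=
  ⟨by simpa [sub_eq_add_neg] using sub_nonneg.2 hx.2,
    by simpa using add_le_add_left (neg_nonpos.2 hx.1) u⟩

theorem neg_add_mem_Icc {u x : G} (hx : x ∈ Icc 0 u) : -x + u ∈ Icc 0 u :=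
  ⟨by simpa using hx.2, by simpa using add_le_add_right (neg_nonpos.2 hx.1) u⟩

section State

variable {R : Type*} [AddCommGroup R] {u : G} {e : R} {s : G → R}

theorem map_add_neg_of_additive (hs1 : s u = e)
    (hadd : ∀ x y : G, 0 ≤ x → 0 ≤ y → x + y ≤ u → s (x + y) = s x + s y)
    {x : G} (hx : x ∈ Icc 0 u) : s (u + -x) = e - s x := by
  have h := hadd (u + -x) x (add_neg_mem_Icc hx).1 hx.1 (by simp)
  rw [neg_add_cancel_right, hs1] at h
  exact eq_sub_of_add_eq h.symm

theorem map_neg_add_of_additive (hs1 : s u = e)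
    (hadd : ∀ x y : G, 0 ≤ x → 0 ≤ y → x + y ≤ u → s (x + y) = s x + s y)
    {x : G} (hx : x ∈ Icc 0 u) : s (-x + u) = -s x + e := by
  have h := hadd x (-x + u) hx.1 (neg_add_mem_Icc hx).1 (by simp)
  rw [add_neg_cancel_left, hs1] at h
  exact eq_neg_add_of_add_eq h.symm

variable [Lattice R] [CovariantClass R R (· + ·) (· ≤ ·)]

theorem map_inf_of_map_add_inf (hs1 : s u = e)
    (hadd : ∀ x y : G, 0 ≤ x → 0 ≤ y → x + y ≤ u → s (x + y) = s x + s y)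
    (hnonneg : ∀ x : G, 0 ≤ x → x ≤ u → 0 ≤ s x)
    (hop : ∀ x y : G, 0 ≤ x → x ≤ u → 0 ≤ y → y ≤ u → s ((x + y) ⊓ u) = (s x + s y) ⊓ e)
    {x y : G} (hx : x ∈ Icc 0 u) (hy : y ∈ Icc 0 u) : s (x ⊓ y) = s x ⊓ s y := by
  have hx' := add_neg_mem_Icc hx
  have hz := add_inf_mem_Icc hx' hy
  have hz' := add_neg_mem_Icc hz
  rw [inf_eq_mv_term u hx.1 hy.1, map_neg_add_of_additive hs1 hadd (add_inf_mem_Icc hz' hx'),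
    hop _ _ hz'.1 hz'.2 hx'.1 hx'.2, map_add_neg_of_additive hs1 hadd hz,
    hop _ _ hx'.1 hx'.2 hy.1 hy.2, map_add_neg_of_additive hs1 hadd hx,
    inf_eq_mv_term e (hnonneg x hx.1 hx.2) (hnonneg y hy.1 hy.2)]
  simp only [sub_eq_add_neg]

theorem map_add_inf_of_map_inf (hs1 : s u = e)
    (hadd : ∀ x y : G, 0 ≤ x → 0 ≤ y → x + y ≤ u → s (x + y) = s x + s y)
    (hinf : ∀ x y : G, 0 ≤ x → x ≤ u → 0 ≤ y → y ≤ u → s (x ⊓ y) = s x ⊓ s y)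
    {x y : G} (hx : x ∈ Icc 0 u) (hy : y ∈ Icc 0 u) : s ((x + y) ⊓ u) = (s x + s y) ⊓ e := by
  have hx' := neg_add_mem_Icc hx
  have hbound : x + (-x + u) ⊓ y ≤ u := by
    simpa using add_le_add_left (inf_le_left : (-x + u) ⊓ y ≤ -x + u) x
  rw [add_inf_eq_add_neg_add_inf, hadd _ _ hx.1 (le_inf hx'.1 hy.1) hbound,
    hinf _ _ hx'.1 hx'.2 hy.1 hy.2, map_neg_add_of_additive hs1 hadd hx,
    ← add_inf_eq_add_neg_add_inf]

end State

end LatticeOrderedGroup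

theorem state_morphism_iff_preserves_inf_general
    {G R : Type*}
    [Lattice G] [AddGroup G]
    [CovariantClass G G (· + ·) (· ≤ ·)]
    [CovariantClass G G (Function.swap (· + ·)) (· ≤ ·)]
    [Lattice R] [AddCommGroup R] [CovariantClass R R (· + ·) (· ≤ ·)]
    (u : G) (hu : 0 ≤ u)
    (oneR : R)
    (s : G → R)
    (hs1 : s u = oneR)
    (hrange : ∀ x : G, 0 ≤ x → x ≤ u → 0 ≤ s x ∧ s x ≤ oneR)
    (hadd : ∀ x y : G, 0 ≤ x → 0 ≤ y → x + y ≤ u → s (x + y) = s x + s y) :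
    ((∀ x y : G, 0 ≤ x → x ≤ u → 0 ≤ y → y ≤ u →
        s ((x + y) ⊓ u) = (s x + s y) ⊓ oneR) ∧
      (∀ x : G, 0 ≤ x → x ≤ u → s (u + -x) = oneR - s x) ∧
      (∀ x : G, 0 ≤ x → x ≤ u → s (-x + u) = -(s x) + oneR) ∧
      s 0 = 0)
    ↔ (∀ x y : G, 0 ≤ x → x ≤ u → 0 ≤ y → y ≤ u →
        s (x ⊓ y) = s x ⊓ s y) := by
  constructor
  · rintro ⟨hop, -, -, -⟩ x y hx hxu hy hyu
    exact map_inf_of_map_add_inf hs1 hadd (fun x hx hxu => (hrange x hx hxu).1) hop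
      ⟨hx, hxu⟩ ⟨hy, hyu⟩
  · intro hinf
    exact ⟨fun x y hx hxu hy hyu => map_add_inf_of_map_inf hs1 hadd hinf ⟨hx, hxu⟩ ⟨hy, hyu⟩,
      fun x hx hxu => map_add_neg_of_additive hs1 hadd ⟨hx, hxu⟩,
      fun x hx hxu => map_neg_add_of_additive hs1 hadd ⟨hx, hxu⟩,
      map_zero_of_additive hu hadd⟩

/-- An `(R,1_R)`-state `s` on the pseudo MV-algebra `Γ(G,u)` is an
`(R,1_R)`-state-morphism (preserves `⊕`, both negations, `0` and `1`) if and only if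
`s(x ∧ y) = s(x) ∧ s(y)` for all `x, y` in `[0,u]`. -/
theorem state_morphism_iff_preserves_inf
    {G R : Type*}
    [Lattice G] [AddGroup G]
    [CovariantClass G G (· + ·) (· ≤ ·)]
    [CovariantClass G G (Function.swap (· + ·)) (· ≤ ·)]
    [Lattice R] [AddCommGroup R] [CovariantClass R R (· + ·) (· ≤ ·)]
    [Module ℝ R] [PosSMulMono ℝ R]
    (u : G) (hu : 0 ≤ u) (hustrong : ∀ g : G, ∃ n : ℕ, 1 ≤ n ∧ g ≤ n • u)
    (oneR : R) (honeR : 0 ≤ oneR)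
    (hRstrong : ∀ r : R, ∃ n : ℕ, 1 ≤ n ∧ r ≤ n • oneR)
    (s : G → R)
    (hs1 : s u = oneR)
    (hrange : ∀ x : G, 0 ≤ x → x ≤ u → 0 ≤ s x ∧ s x ≤ oneR)
    (hadd : ∀ x y : G, 0 ≤ x → 0 ≤ y → x + y ≤ u → s (x + y) = s x + s y) :
    ((∀ x y : G, 0 ≤ x → x ≤ u → 0 ≤ y → y ≤ u →
        s ((x + y) ⊓ u) = (s x + s y) ⊓ oneR) ∧
      (∀ x : G, 0 ≤ x → x ≤ u → s (u + -x) = oneR - s x) ∧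
      (∀ x : G, 0 ≤ x → x ≤ u → s (-x + u) = -(s x) + oneR) ∧
      s 0 = 0)
    ↔ (∀ x y : G, 0 ≤ x → x ≤ u → 0 ≤ y → y ≤ u →
        s (x ⊓ y) = s x ⊓ s y) :=
  state_morphism_iff_preserves_inf_general u hu oneR s hs1 hrange hadd
end

section
/- Let s be an (R, 1_R)-state on a pseudo MV-algebra M whose kernel Ker(s) = {x : s(x) = 0} is a maximal ideal of M. Then s is an (R, 1_R)-state-morphism, i.e., s(x ∧ y) = s(x) ∧ s(y) for all x, y. -/
/-! A maximal ideal `I` of `Γ(G,u)` is prime for disjoint elements: if `a ⊓ b = 0` and `a ∉ I`,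
then `{z | z ⊓ b ∈ I}` is an ideal (closed under `⊕` by the Riesz-type inequality
`(p + q) ⊓ b ≤ p ⊓ b + q ⊓ b`) strictly larger than `I`, as it contains `a`; so it is everything,
and `b = b ⊓ b ∈ I`. Writing `m = x ⊓ y`, the elements `-m + x` and `-m + y` are disjoint, so one of
them lies in the kernel of `s`; additivity then gives `s m = (s m + s(-m + x)) ⊓ (s m + s(-m + y))
= s x ⊓ s y`. -/

section

variable {G : Type*} [Lattice G] [AddGroup G]
  [CovariantClass G G (· + ·) (· ≤ ·)]
  [CovariantClass G G (Function.swap (· + ·)) (· ≤ ·)]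

/-- An ideal of the pseudo MV-algebra `Γ(G,u) = [0,u]`: a nonempty downward-closed
subset of `[0,u]` closed under the MV-sum `x ⊕ y = (x + y) ⊓ u`. -/
def IsMVIdeal (u : G) (I : Set G) : Prop :=
  I ⊆ {x : G | 0 ≤ x ∧ x ≤ u} ∧ I.Nonempty ∧
  (∀ a b : G, b ∈ I → 0 ≤ a → a ≤ b → a ∈ I) ∧
  (∀ a ∈ I, ∀ b ∈ I, (a + b) ⊓ u ∈ I)

/-- A maximal ideal of `Γ(G,u)`: a proper ideal not properly contained in any
proper ideal. -/
def IsMaximalMVIdeal (u : G) (I : Set G) : Prop :=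
  IsMVIdeal u I ∧ I ≠ {x : G | 0 ≤ x ∧ x ≤ u} ∧
  ∀ J : Set G, IsMVIdeal u J → I ⊆ J → J = I ∨ J = {x : G | 0 ≤ x ∧ x ≤ u}

section LatticeOrderedGroup

variable {α : Type*} [Lattice α] [AddGroup α]

theorem add_inf_le_inf_add_inf [AddLeftMono α] [AddRightMono α] {p q b : α} (hp : 0 ≤ p)
    (hq : 0 ≤ q) (hb : 0 ≤ b) : (p + q) ⊓ b ≤ p ⊓ b + q ⊓ b := by
  rw [inf_add, add_inf]
  refine le_inf (le_inf inf_le_left ?_) ?_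
  · exact inf_le_right.trans (le_add_of_nonneg_left hp)
  · exact inf_le_right.trans (le_add_of_nonneg_right (le_inf hq hb))

theorem neg_add_mem_Icc_s6 [AddLeftMono α] [AddRightMono α] {u m z : α} (hm : 0 ≤ m) (hmz : m ≤ z)
    (hzu : z ≤ u) : 0 ≤ -m + z ∧ -m + z ≤ u :=
  ⟨le_neg_add_iff_le.mpr hmz, (neg_add_le_iff_le_add.mpr (le_add_of_nonneg_left hm)).trans hzu⟩

theorem map_eq_add_map_neg_add [AddLeftMono α] {R : Type*} [Add R] {u : α} {s : α → R}
    (hadd : ∀ x y : α, 0 ≤ x → 0 ≤ y → x + y ≤ u → s (x + y) = s x + s y)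
    {m z : α} (hm : 0 ≤ m) (hmz : m ≤ z) (hzu : z ≤ u) : s z = s m + s (-m + z) := by
  simpa using hadd m (-m + z) hm (le_neg_add_iff_le.mpr hmz) (by simpa using hzu)

def infPreimage (u b : α) (I : Set α) : Set α :=
  {z | (0 ≤ z ∧ z ≤ u) ∧ z ⊓ b ∈ I}

namespace IsMVIdeal

variable {u : α} {I : Set α}

theorem zero_mem (hI : IsMVIdeal u I) : (0 : α) ∈ I := by
  obtain ⟨x, hx⟩ := hI.2.1
  exact hI.2.2.1 0 x hx le_rfl (hI.1 hx).1

theorem subset_infPreimage (hI : IsMVIdeal u I) {b : α} (hb : 0 ≤ b) :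
    I ⊆ infPreimage u b I := fun i hi =>
  ⟨hI.1 hi, hI.2.2.1 _ i hi (le_inf (hI.1 hi).1 hb) inf_le_left⟩

variable [AddLeftMono α] [AddRightMono α]

theorem infPreimage (hI : IsMVIdeal u I) {b : α} (hb : 0 ≤ b) :
    IsMVIdeal u (infPreimage u b I) := by
  have h0 := hI.zero_mem
  obtain ⟨hsub, -, hdown, hadd⟩ := hI
  refine ⟨fun z hz => hz.1, ⟨0, hsub h0, by rwa [inf_of_le_left hb]⟩, ?_, ?_⟩
  · rintro p q ⟨⟨-, hqu⟩, hqb⟩ hp hpq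
    exact ⟨⟨hp, hpq.trans hqu⟩, hdown _ _ hqb (le_inf hp hb) (inf_le_inf_right b hpq)⟩
  · rintro p ⟨⟨hp, hpu⟩, hpb⟩ q ⟨⟨hq, -⟩, hqb⟩
    have hsum : 0 ≤ (p + q) ⊓ u := le_inf (add_nonneg hp hq) (hp.trans hpu)
    have hle : (p + q) ⊓ u ⊓ b ≤ (p ⊓ b + q ⊓ b) ⊓ u :=
      le_inf ((inf_le_inf_right b inf_le_left).trans (add_inf_le_inf_add_inf hp hq hb))
        (inf_le_left.trans inf_le_right)
    exact ⟨⟨hsum, inf_le_right⟩, hdown _ _ (hadd _ hpb _ hqb) (le_inf hsum hb) hle⟩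

end IsMVIdeal

theorem IsMaximalMVIdeal.mem_or_mem_of_inf_eq_zero [AddLeftMono α] [AddRightMono α] {u : α}
    {I : Set α} (hI : IsMaximalMVIdeal u I) {a b : α} (ha : 0 ≤ a) (hau : a ≤ u) (hb : 0 ≤ b)
    (hbu : b ≤ u) (hab : a ⊓ b = 0) : a ∈ I ∨ b ∈ I := by
  obtain ⟨hideal, -, hmax⟩ := hI
  have haJ : a ∈ infPreimage u b I := ⟨⟨ha, hau⟩, hab ▸ hideal.zero_mem⟩
  rcases hmax _ (hideal.infPreimage hb) (hideal.subset_infPreimage hb) with hJ | hJ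
  · exact Or.inl (hJ ▸ haJ)
  · have hbJ : b ∈ infPreimage u b I := hJ ▸ ⟨hb, hbu⟩
    exact Or.inr (inf_idem b ▸ hbJ.2)

end LatticeOrderedGroup

theorem state_morphism_of_maximal_kernel_general
    {R : Type*}
    [Lattice R] [AddCommGroup R] [CovariantClass R R (· + ·) (· ≤ ·)]
    (u : G)
    (oneR : R)
    (s : G → R)
    (hrange : ∀ x : G, 0 ≤ x → x ≤ u → 0 ≤ s x ∧ s x ≤ oneR)
    (hadd : ∀ x y : G, 0 ≤ x → 0 ≤ y → x + y ≤ u → s (x + y) = s x + s y)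
    (hker : IsMaximalMVIdeal u {x : G | (0 ≤ x ∧ x ≤ u) ∧ s x = 0}) :
    ∀ x y : G, 0 ≤ x → x ≤ u → 0 ≤ y → y ≤ u →
      s (x ⊓ y) = s x ⊓ s y := by
  intro x y hx hxu hy hyu
  set m := x ⊓ y
  have hm : 0 ≤ m := le_inf hx hy
  have hxm := neg_add_mem_Icc_s6 hm inf_le_left hxu
  have hym := neg_add_mem_Icc_s6 hm inf_le_right hyu
  have hdisj : (-m + x) ⊓ (-m + y) = 0 := by rw [← add_inf, neg_add_cancel]
  have hkernel : s (-m + x) ⊓ s (-m + y) = 0 := by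
    rcases hker.mem_or_mem_of_inf_eq_zero hxm.1 hxm.2 hym.1 hym.2 hdisj with h | h
    · rw [h.2]
      exact inf_of_le_left (hrange _ hym.1 hym.2).1
    · rw [h.2]
      exact inf_of_le_right (hrange _ hxm.1 hxm.2).1
  rw [map_eq_add_map_neg_add hadd hm inf_le_left hxu,
    map_eq_add_map_neg_add hadd hm inf_le_right hyu, ← add_inf, hkernel, add_zero]

/-- If the kernel of an `(R,1_R)`-state `s` on the pseudo MV-algebra
`Γ(G,u)` is a maximal ideal, then `s` is an `(R,1_R)`-state-morphism, i.e.
`s(x ∧ y) = s(x) ∧ s(y)`. -/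
theorem state_morphism_of_maximal_kernel
    {R : Type*}
    [Lattice R] [AddCommGroup R] [CovariantClass R R (· + ·) (· ≤ ·)]
    [Module ℝ R] [PosSMulMono ℝ R]
    (u : G) (hu : 0 ≤ u) (hustrong : ∀ g : G, ∃ n : ℕ, 1 ≤ n ∧ g ≤ n • u)
    (oneR : R) (honeR : 0 ≤ oneR)
    (hRstrong : ∀ r : R, ∃ n : ℕ, 1 ≤ n ∧ r ≤ n • oneR)
    (s : G → R)
    (hs1 : s u = oneR)
    (hrange : ∀ x : G, 0 ≤ x → x ≤ u → 0 ≤ s x ∧ s x ≤ oneR)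
    (hadd : ∀ x y : G, 0 ≤ x → 0 ≤ y → x + y ≤ u → s (x + y) = s x + s y)
    (hker : IsMaximalMVIdeal u {x : G | (0 ≤ x ∧ x ≤ u) ∧ s x = 0}) :
    ∀ x y : G, 0 ≤ x → x ≤ u → 0 ≤ y → y ≤ u →
      s (x ⊓ y) = s x ⊓ s y :=
  state_morphism_of_maximal_kernel_general u oneR s hrange hadd hker

end
end

section
/- Let (R, 1_R) be a unital Riesz space in which every strictly positive element is a strong unit. If s is an (R, 1_R)-state-morphism on a pseudo MV-algebra M, then Ker(s) is a maximal ideal of M. -/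
section LatticeOrderedGroup

variable {α : Type*} [Lattice α] [AddGroup α] [AddLeftMono α] [AddRightMono α]

theorem inf_add_inf_of_nonneg (a u : α) {x : α} (hx : 0 ≤ x) :
    (a ⊓ u + x) ⊓ u = (a + x) ⊓ u := by
  rw [inf_add, inf_assoc, inf_eq_right.2 (le_add_of_nonneg_right hx)]

theorem nsmul_inf_succ_of_nonneg (n : ℕ) (u : α) {x : α} (hx : 0 ≤ x) :
    ((n • x) ⊓ u + x) ⊓ u = ((n + 1) • x) ⊓ u := by
  rw [inf_add_inf_of_nonneg _ _ hx, succ_nsmul]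

theorem neg_add_mem_Icc_s7 {a b u : α} (ha : 0 ≤ a) (hab : a ≤ b) (hbu : b ≤ u) :
    0 ≤ -a + b ∧ -a + b ≤ u :=
  ⟨le_neg_add_iff_le.2 hab, (neg_add_le_iff_le_add.2 (le_add_of_nonneg_left ha)).trans hbu⟩

theorem add_neg_mem_Icc_s7 {z u : α} (hz : 0 ≤ z) (hzu : z ≤ u) : 0 ≤ u + -z ∧ u + -z ≤ u := by
  rw [← sub_eq_add_neg]
  exact ⟨sub_nonneg.2 hzu, sub_le_self u hz⟩

end LatticeOrderedGroup

namespace IsMVIdeal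

variable {G : Type*} [Lattice G] [AddGroup G] {u : G} {I : Set G}

theorem nsmul_inf_mem [AddLeftMono G] [AddRightMono G] (hI : IsMVIdeal u I) {x : G}
    (hx : x ∈ I) {n : ℕ} (hn : 1 ≤ n) : (n • x) ⊓ u ∈ I := by
  obtain ⟨hx0, hxu⟩ := hI.1 hx
  induction n, hn using Nat.le_induction with
  | base => rwa [one_nsmul, inf_eq_left.2 hxu]
  | succ n _ ih => simpa only [nsmul_inf_succ_of_nonneg n u hx0] using hI.2.2.2 _ ih x hx

theorem eq_Icc_of_mem (hI : IsMVIdeal u I) (hu : u ∈ I) : I = {x : G | 0 ≤ x ∧ x ≤ u} :=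
  (hI.1).antisymm fun x hx => hI.2.2.1 x u hu hx.1 hx.2

theorem eq_Icc_of_mem_of_add_neg_mem (hI : IsMVIdeal u I) {z : G} (hz : z ∈ I)
    (hz' : u + -z ∈ I) : I = {x : G | 0 ≤ x ∧ x ≤ u} := by
  have hu := hI.2.2.2 _ hz' _ hz
  rw [neg_add_cancel_right, inf_idem] at hu
  exact hI.eq_Icc_of_mem hu

end IsMVIdeal

section StateMorphism

variable {G R : Type*} [Lattice G] [AddGroup G] [Lattice R] [AddCommGroup R]

def stateKer (u : G) (s : G → R) : Set G := {x : G | (0 ≤ x ∧ x ≤ u) ∧ s x = 0}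

variable [AddLeftMono G] [AddRightMono G] [AddLeftMono R] {u : G} {oneR : R} {s : G → R}

theorem state_mono (hrange : ∀ x : G, 0 ≤ x → x ≤ u → 0 ≤ s x ∧ s x ≤ oneR)
    (hoplus : ∀ x y : G, 0 ≤ x → x ≤ u → 0 ≤ y → y ≤ u →
      s ((x + y) ⊓ u) = (s x + s y) ⊓ oneR)
    {a b : G} (ha : 0 ≤ a) (hab : a ≤ b) (hbu : b ≤ u) : s a ≤ s b := by
  obtain ⟨hc0, hcu⟩ := neg_add_mem_Icc_s7 ha hab hbu
  have hb := hoplus a (-a + b) ha (hab.trans hbu) hc0 hcu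
  rw [add_neg_cancel_left, inf_eq_left.2 hbu] at hb
  rw [hb]
  exact le_inf (le_add_of_nonneg_right (hrange _ hc0 hcu).1) (hrange a ha (hab.trans hbu)).2

theorem state_nsmul_inf (hrange : ∀ x : G, 0 ≤ x → x ≤ u → 0 ≤ s x ∧ s x ≤ oneR)
    (hoplus : ∀ x y : G, 0 ≤ x → x ≤ u → 0 ≤ y → y ≤ u →
      s ((x + y) ⊓ u) = (s x + s y) ⊓ oneR)
    {x : G} (hx0 : 0 ≤ x) (hxu : x ≤ u) {n : ℕ} (hn : 1 ≤ n) :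
    s ((n • x) ⊓ u) = (n • s x) ⊓ oneR := by
  obtain ⟨hsx0, hsx1⟩ := hrange x hx0 hxu
  induction n, hn using Nat.le_induction with
  | base => rw [one_nsmul, one_nsmul, inf_eq_left.2 hxu, inf_eq_left.2 hsx1]
  | succ n _ ih =>
    have hn0 : 0 ≤ (n • x) ⊓ u := le_inf (nsmul_nonneg hx0 n) (hx0.trans hxu)
    rw [← nsmul_inf_succ_of_nonneg n u hx0, hoplus _ x hn0 inf_le_right hx0 hxu, ih,
      nsmul_inf_succ_of_nonneg n oneR hsx0]

theorem isMVIdeal_stateKer (hu : 0 ≤ u) (honeR : 0 ≤ oneR) (hs0 : s 0 = 0)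
    (hrange : ∀ x : G, 0 ≤ x → x ≤ u → 0 ≤ s x ∧ s x ≤ oneR)
    (hoplus : ∀ x y : G, 0 ≤ x → x ≤ u → 0 ≤ y → y ≤ u →
      s ((x + y) ⊓ u) = (s x + s y) ⊓ oneR) :
    IsMVIdeal u (stateKer u s) := by
  refine ⟨fun x hx => hx.1, ⟨0, ⟨le_rfl, hu⟩, hs0⟩, ?_, ?_⟩
  · rintro a b ⟨⟨-, hbu⟩, hb⟩ ha hab
    have hau := hab.trans hbu
    exact ⟨⟨ha, hau⟩, (hb ▸ state_mono hrange hoplus ha hab hbu).antisymm (hrange a ha hau).1⟩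
  · rintro a ⟨⟨ha0, hau⟩, ha⟩ b ⟨⟨hb0, hbu⟩, hb⟩
    refine ⟨⟨le_inf (add_nonneg ha0 hb0) hu, inf_le_right⟩, ?_⟩
    rw [hoplus a b ha0 hau hb0 hbu, ha, hb, add_zero, inf_eq_left.2 honeR]

end StateMorphism

section

variable {G : Type*} [Lattice G] [AddGroup G]
  [CovariantClass G G (· + ·) (· ≤ ·)]
  [CovariantClass G G (Function.swap (· + ·)) (· ≤ ·)]

theorem maximal_kernel_of_state_morphism_general
    {R : Type*}
    [Lattice R] [AddCommGroup R] [CovariantClass R R (· + ·) (· ≤ ·)]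
    (u : G) (hu : 0 ≤ u)
    (oneR : R) (honeR : 0 < oneR)
    (hRsimple : ∀ e : R, 0 < e → ∀ r : R, ∃ n : ℕ, 1 ≤ n ∧ r ≤ n • e)
    (s : G → R)
    (hs0 : s 0 = 0) (hs1 : s u = oneR)
    (hrange : ∀ x : G, 0 ≤ x → x ≤ u → 0 ≤ s x ∧ s x ≤ oneR)
    (hoplus : ∀ x y : G, 0 ≤ x → x ≤ u → 0 ≤ y → y ≤ u →
      s ((x + y) ⊓ u) = (s x + s y) ⊓ oneR)
    (hnegl : ∀ x : G, 0 ≤ x → x ≤ u → s (u + -x) = oneR - s x) :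
    IsMaximalMVIdeal u {x : G | (0 ≤ x ∧ x ≤ u) ∧ s x = 0} := by
  have hK : IsMVIdeal u (stateKer u s) := isMVIdeal_stateKer hu honeR.le hs0 hrange hoplus
  refine ⟨hK, fun hK_eq => ?_, fun J hJ hKJ => ?_⟩
  · have hu_mem : u ∈ stateKer u s := hK_eq.symm.subset ⟨hu, le_rfl⟩
    exact honeR.ne' (hs1 ▸ hu_mem.2)
  by_cases hJK : J ⊆ stateKer u s
  · exact Or.inl (hJK.antisymm hKJ)
  obtain ⟨x, hxJ, hxK⟩ := Set.not_subset.1 hJK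
  obtain ⟨hx0, hxu⟩ := hJ.1 hxJ
  have hsx : 0 < s x := (hrange x hx0 hxu).1.lt_of_ne fun h => hxK ⟨⟨hx0, hxu⟩, h.symm⟩
  obtain ⟨n, hn, hsxn⟩ := hRsimple (s x) hsx oneR
  set z := (n • x) ⊓ u
  have hsz : s z = oneR := by
    rw [state_nsmul_inf hrange hoplus hx0 hxu hn, inf_eq_right.2 hsxn]
  obtain ⟨hz0, hzu⟩ : 0 ≤ z ∧ z ≤ u := ⟨le_inf (nsmul_nonneg hx0 n) hu, inf_le_right⟩
  have hz'K : u + -z ∈ stateKer u s :=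
    ⟨add_neg_mem_Icc_s7 hz0 hzu, by rw [hnegl z hz0 hzu, hsz, sub_self]⟩
  exact Or.inr (hJ.eq_Icc_of_mem_of_add_neg_mem (hJ.nsmul_inf_mem hxJ hn) (hKJ hz'K))

/-- If every strictly positive element of the unital Riesz space `(R,1_R)`
is a strong unit, then the kernel of any `(R,1_R)`-state-morphism on a pseudo
MV-algebra `Γ(G,u)` is a maximal ideal. -/
theorem maximal_kernel_of_state_morphism
    {R : Type*}
    [Lattice R] [AddCommGroup R] [CovariantClass R R (· + ·) (· ≤ ·)]
    [Module ℝ R] [PosSMulMono ℝ R]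
    (u : G) (hu : 0 ≤ u) (hustrong : ∀ g : G, ∃ n : ℕ, 1 ≤ n ∧ g ≤ n • u)
    (oneR : R) (honeR : 0 < oneR)
    (hRstrong : ∀ r : R, ∃ n : ℕ, 1 ≤ n ∧ r ≤ n • oneR)
    (hRsimple : ∀ e : R, 0 < e → ∀ r : R, ∃ n : ℕ, 1 ≤ n ∧ r ≤ n • e)
    (s : G → R)
    (hs0 : s 0 = 0) (hs1 : s u = oneR)
    (hrange : ∀ x : G, 0 ≤ x → x ≤ u → 0 ≤ s x ∧ s x ≤ oneR)
    (hoplus : ∀ x y : G, 0 ≤ x → x ≤ u → 0 ≤ y → y ≤ u →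
      s ((x + y) ⊓ u) = (s x + s y) ⊓ oneR)
    (hnegl : ∀ x : G, 0 ≤ x → x ≤ u → s (u + -x) = oneR - s x)
    (hnegr : ∀ x : G, 0 ≤ x → x ≤ u → s (-x + u) = -(s x) + oneR) :
    IsMaximalMVIdeal u {x : G | (0 ≤ x ∧ x ≤ u) ∧ s x = 0} :=
  maximal_kernel_of_state_morphism_general u hu oneR honeR hRsimple s hs0 hs1 hrange hoplus hnegl

end
end

section
/- Two MV-subalgebras of the standard MV-algebra [0,1] that are isomorphic as MV-algebras are equal, and the isomorphism is the identity map. -/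
/-!
On `[0,1]` we have `x + y = (x ⊕ y) + (x ⊙ y)` with `x ⊙ y = ¬(¬x ⊕ ¬y) = max (x + y - 1) 0`,
and an MV-homomorphism `φ` preserves `⊕` and `⊙`. So `φ` is additive on sums `x + y ≤ 1` and
sends `x + y - 1` to `φ x + φ y - 1` when `x + y ≥ 1`. Adding up `n` copies of `x` while
subtracting `1` at each overflow shows that `n * x ≤ m` implies `n * φ x ≤ m` for integers `m`;
hence `φ x ≤ x`, and applying this to `1 - x` gives `φ x = x`. Finally `B = φ '' A = A`.
-/

open Set

structure IsMVSubalgebra (A : Set ℝ) : Prop where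
  subset_Icc : A ⊆ Icc 0 1
  zero_mem : (0 : ℝ) ∈ A
  oplus_mem : ∀ x ∈ A, ∀ y ∈ A, min (x + y) 1 ∈ A
  one_sub_mem : ∀ x ∈ A, 1 - x ∈ A

structure IsMVHomOn (A : Set ℝ) (φ : ℝ → ℝ) : Prop where
  map_zero : φ 0 = 0
  map_oplus : ∀ x ∈ A, ∀ y ∈ A, φ (min (x + y) 1) = min (φ x + φ y) 1
  map_one_sub : ∀ x ∈ A, φ (1 - x) = 1 - φ x

lemma min_add_one_add_one_sub_min (a b : ℝ) :
    min (a + b) 1 + (1 - min ((1 - a) + (1 - b)) 1) = a + b := by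
  rcases le_total (a + b) 1 with h | h
  · rw [min_eq_left h, min_eq_right (by linarith)]; ring
  · rw [min_eq_right h, min_eq_left (by linarith)]; ring

variable {A : Set ℝ} {φ : ℝ → ℝ} {x y : ℝ}

namespace IsMVSubalgebra

lemma odot_mem (hA : IsMVSubalgebra A) (hx : x ∈ A) (hy : y ∈ A) :
    1 - min ((1 - x) + (1 - y)) 1 ∈ A :=
  hA.one_sub_mem _ (hA.oplus_mem _ (hA.one_sub_mem x hx) _ (hA.one_sub_mem y hy))

lemma add_mem (hA : IsMVSubalgebra A) (hx : x ∈ A) (hy : y ∈ A) (hxy : x + y ≤ 1) :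
    x + y ∈ A := by
  simpa [min_eq_left hxy] using hA.oplus_mem x hx y hy

lemma add_sub_one_mem (hA : IsMVSubalgebra A) (hx : x ∈ A) (hy : y ∈ A) (hxy : 1 ≤ x + y) :
    x + y - 1 ∈ A := by
  have h := hA.odot_mem hx hy
  rwa [min_eq_left (by linarith), show 1 - (1 - x + (1 - y)) = x + y - 1 by ring] at h

end IsMVSubalgebra

namespace IsMVHomOn

lemma map_one (hA : IsMVSubalgebra A) (hφ : IsMVHomOn A φ) : φ 1 = 1 := by
  simpa [hφ.map_zero] using hφ.map_one_sub 0 hA.zero_mem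

lemma map_le_one (hA : IsMVSubalgebra A) (hφ : IsMVHomOn A φ) (hx : x ∈ A) : φ x ≤ 1 := by
  have h := hφ.map_oplus x hx 0 hA.zero_mem
  rw [add_zero, min_eq_left (hA.subset_Icc hx).2, hφ.map_zero, add_zero] at h
  exact h ▸ min_le_right _ _

lemma map_oplus_add_map_odot (hA : IsMVSubalgebra A) (hφ : IsMVHomOn A φ)
    (hx : x ∈ A) (hy : y ∈ A) :
    φ (min (x + y) 1) + φ (1 - min ((1 - x) + (1 - y)) 1) = φ x + φ y := by
  have hx' := hA.one_sub_mem x hx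
  have hy' := hA.one_sub_mem y hy
  rw [hφ.map_oplus x hx y hy, hφ.map_one_sub _ (hA.oplus_mem _ hx' _ hy'),
    hφ.map_oplus _ hx' _ hy', hφ.map_one_sub x hx, hφ.map_one_sub y hy]
  exact min_add_one_add_one_sub_min _ _

lemma map_add (hA : IsMVSubalgebra A) (hφ : IsMVHomOn A φ) (hx : x ∈ A) (hy : y ∈ A)
    (hxy : x + y ≤ 1) : φ (x + y) = φ x + φ y := by
  have h := hφ.map_oplus_add_map_odot hA hx hy
  rwa [min_eq_left hxy, min_eq_right (by linarith), sub_self, hφ.map_zero, add_zero] at h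

lemma map_add_sub_one (hA : IsMVSubalgebra A) (hφ : IsMVHomOn A φ) (hx : x ∈ A) (hy : y ∈ A)
    (hxy : 1 ≤ x + y) : φ (x + y - 1) = φ x + φ y - 1 := by
  have h := hφ.map_oplus_add_map_odot hA hx hy
  rw [min_eq_right hxy, hφ.map_one hA, min_eq_left (by linarith),
    show 1 - (1 - x + (1 - y)) = x + y - 1 by ring] at h
  linarith

lemma map_le_intCast (hA : IsMVSubalgebra A) (hφ : IsMVHomOn A φ) (hx : x ∈ A) {m : ℤ}
    (h : x ≤ m) : φ x ≤ m := by
  obtain ⟨hx0, -⟩ := hA.subset_Icc hx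
  rcases le_or_gt m 0 with hm | hm
  · have hm0 : (m : ℝ) = 0 := le_antisymm (by exact_mod_cast hm) (hx0.trans h)
    rw [hm0, le_antisymm (hm0 ▸ h) hx0, hφ.map_zero]
  · exact (hφ.map_le_one hA hx).trans (by exact_mod_cast hm)

lemma add_natCast_mul_map_le (hA : IsMVSubalgebra A) (hφ : IsMVHomOn A φ) (hx : x ∈ A)
    (n : ℕ) :
    ∀ a ∈ A, ∀ m : ℤ, a + n * x ≤ m → φ a + n * φ x ≤ m := by
  induction n with
  | zero => simpa using fun a ha m => hφ.map_le_intCast hA ha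
  | succ n ih =>
    intro a ha m h
    push_cast at h ⊢
    rcases le_total (a + x) 1 with hax | hax
    · have := ih (a + x) (hA.add_mem ha hx hax) m (by linarith)
      rw [hφ.map_add hA ha hx hax] at this
      linarith
    · have := ih (a + x - 1) (hA.add_sub_one_mem ha hx hax) (m - 1) (by push_cast; linarith)
      rw [hφ.map_add_sub_one hA ha hx hax] at this
      push_cast at this
      linarith

lemma natCast_mul_map_le (hA : IsMVSubalgebra A) (hφ : IsMVHomOn A φ) (hx : x ∈ A) (n : ℕ)
    {m : ℤ} (h : n * x ≤ m) : n * φ x ≤ m := by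
  simpa [hφ.map_zero] using
    hφ.add_natCast_mul_map_le hA hx n 0 hA.zero_mem m (by simpa using h)

lemma map_le_self (hA : IsMVSubalgebra A) (hφ : IsMVHomOn A φ) (hx : x ∈ A) : φ x ≤ x := by
  refine le_of_forall_pos_lt_add fun ε hε => ?_
  obtain ⟨n, hn⟩ := exists_nat_one_div_lt hε
  have hn0 : (0 : ℝ) < n + 1 := by positivity
  have hceil := hφ.natCast_mul_map_le hA hx (n + 1) (Int.le_ceil ((n + 1 : ℕ) * x))
  have hlt := Int.ceil_lt_add_one ((n + 1 : ℕ) * x)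
  push_cast at hceil hlt
  have : φ x < x + 1 / (n + 1) := by
    rw [← mul_lt_mul_iff_of_pos_left hn0, mul_add, mul_one_div_cancel hn0.ne']
    linarith
  linarith

theorem map_eq_self (hA : IsMVSubalgebra A) (hφ : IsMVHomOn A φ) (hx : x ∈ A) : φ x = x := by
  have h := hφ.map_le_self hA (hA.one_sub_mem x hx)
  rw [hφ.map_one_sub x hx] at h
  exact le_antisymm (hφ.map_le_self hA hx) (by linarith)

end IsMVHomOn

theorem mv_subalgebras_of_unit_interval_isomorphic_eq_general
    (A B : Set ℝ)
    (hA : A ⊆ Set.Icc 0 1)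
    (h0A : (0 : ℝ) ∈ A)
    (hAoplus : ∀ x ∈ A, ∀ y ∈ A, min (x + y) 1 ∈ A)
    (hAneg : ∀ x ∈ A, 1 - x ∈ A)
    (φ : ℝ → ℝ)
    (hbij : Set.BijOn φ A B)
    (hφ0 : φ 0 = 0)
    (hφoplus : ∀ x ∈ A, ∀ y ∈ A, φ (min (x + y) 1) = min (φ x + φ y) 1)
    (hφneg : ∀ x ∈ A, φ (1 - x) = 1 - φ x) :
    A = B ∧ ∀ x ∈ A, φ x = x := by
  have hsub : IsMVSubalgebra A := ⟨hA, h0A, hAoplus, hAneg⟩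
  have hid : ∀ x ∈ A, φ x = x := fun x hx =>
    IsMVHomOn.map_eq_self hsub ⟨hφ0, hφoplus, hφneg⟩ hx
  refine ⟨?_, hid⟩
  rw [← hbij.image_eq, EqOn.image_eq_self hid]

/-- Two MV-subalgebras of the standard MV-algebra `[0,1]` that are
isomorphic as MV-algebras are equal, and the isomorphism is the identity. -/
theorem mv_subalgebras_of_unit_interval_isomorphic_eq
    (A B : Set ℝ)
    (hA : A ⊆ Set.Icc 0 1) (hB : B ⊆ Set.Icc 0 1)
    (h0A : (0 : ℝ) ∈ A) (h1A : (1 : ℝ) ∈ A)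
    (h0B : (0 : ℝ) ∈ B) (h1B : (1 : ℝ) ∈ B)
    (hAoplus : ∀ x ∈ A, ∀ y ∈ A, min (x + y) 1 ∈ A)
    (hAneg : ∀ x ∈ A, 1 - x ∈ A)
    (hBoplus : ∀ x ∈ B, ∀ y ∈ B, min (x + y) 1 ∈ B)
    (hBneg : ∀ x ∈ B, 1 - x ∈ B)
    (φ : ℝ → ℝ)
    (hbij : Set.BijOn φ A B)
    (hφ0 : φ 0 = 0) (hφ1 : φ 1 = 1)
    (hφoplus : ∀ x ∈ A, ∀ y ∈ A, φ (min (x + y) 1) = min (φ x + φ y) 1)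
    (hφneg : ∀ x ∈ A, φ (1 - x) = 1 - φ x) :
    A = B ∧ ∀ x ∈ A, φ x = x :=
  mv_subalgebras_of_unit_interval_isomorphic_eq_general A B hA h0A hAoplus hAneg φ hbij hφ0 hφoplus
    hφneg
end

section
/- Let G₁ and G₂ be subgroups of (ℝ, +) both containing a nonzero element g₀, and let φ : G₁ → G₂ be an injective order-preserving group homomorphism with φ(g₀) = g₀. Then G₁ ⊆ G₂ and φ is the inclusion map. If φ is also surjective, then G₁ = G₂. -/
/-!
The additive map `f = φ` fixes some `g > 0` of `G₁` (`g₀` or `-g₀`). If `f x ≠ x`, say `x < f x`, choose `n` with `g < n • (f x - x)`; then some multiple `k • g` lies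
strictly between `n • x` and `n • f x`. Both `n • x` and `k • g` lie in the subgroup, and `f` fixes
`k • g`, so monotonicity gives `n • f x ≤ k • g`, a contradiction.
-/

namespace AddMonoidHom

variable {K : Type*} [AddCommGroup K] [LinearOrder K] [IsOrderedAddMonoid K] [Archimedean K]
  {G : AddSubgroup K}

theorem apply_le_self_of_monotone_of_apply_eq_self_of_pos (f : G →+ K) (hf : Monotone f)
    {g : G} (hg : 0 < (g : K)) (hfg : f g = g) (x : G) : f x ≤ x := by
  by_contra! hlt
  obtain ⟨n, hn⟩ := exists_lt_nsmul (sub_pos.2 hlt) (g : K)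
  obtain ⟨k, hk⟩ := (existsUnique_zsmul_near_of_pos hg (n • (x : K))).exists
  have hmul_lt : n • (x : K) < ((k + 1) • g : G) := by simpa using hk.2
  have hmul_gt : ((k + 1) • g : G) < n • f x := by
    calc (((k + 1) • g : G) : K) = k • (g : K) + g := by simp [add_zsmul]
      _ < n • (x : K) + n • (f x - x) := add_lt_add_of_le_of_lt hk.1 hn
      _ = n • f x := by rw [← nsmul_add, add_sub_cancel]
  have hmono : n • f x ≤ ((k + 1) • g : G) := by
    simpa [hfg] using hf (show n • x ≤ (k + 1) • g from mod_cast hmul_lt.le)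
  exact hmono.not_gt hmul_gt

theorem apply_eq_self_of_monotone_of_apply_eq_self (f : G →+ K) (hf : Monotone f)
    {g : G} (hg : (g : K) ≠ 0) (hfg : f g = g) (x : G) : f x = x := by
  obtain ⟨g', hg'_pos, hfg'⟩ : ∃ g' : G, 0 < (g' : K) ∧ f g' = g' := by
    rcases hg.lt_or_gt with hneg | hpos
    · exact ⟨-g, by simpa using hneg, by simp [hfg]⟩
    · exact ⟨g, hpos, hfg⟩
  have hle := f.apply_le_self_of_monotone_of_apply_eq_self_of_pos hf hg'_pos hfg'
  exact le_antisymm (hle x) (by simpa using hle (-x))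

end AddMonoidHom

theorem subgroups_of_real_hom_eq_general
    (G₁ G₂ : AddSubgroup ℝ) (g₀ : ℝ) (hg₀ : g₀ ≠ 0)
    (hg₁ : g₀ ∈ G₁)
    (φ : ℝ → ℝ)
    (hmaps : Set.MapsTo φ (G₁ : Set ℝ) (G₂ : Set ℝ))
    (hadd : ∀ x ∈ G₁, ∀ y ∈ G₁, φ (x + y) = φ x + φ y)
    (hmono : ∀ x ∈ G₁, ∀ y ∈ G₁, x ≤ y → φ x ≤ φ y)
    (hfix : φ g₀ = g₀) :
    ((G₁ : Set ℝ) ⊆ (G₂ : Set ℝ) ∧ ∀ x ∈ G₁, φ x = x) ∧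
    (Set.SurjOn φ (G₁ : Set ℝ) (G₂ : Set ℝ) → G₁ = G₂) := by
  let ψ : G₁ →+ ℝ := AddMonoidHom.mk' (fun x => φ x) fun x y => hadd x x.2 y y.2
  have hφ_eq : ∀ x ∈ G₁, φ x = x := fun x hx =>
    ψ.apply_eq_self_of_monotone_of_apply_eq_self (fun a b hab => hmono a a.2 b b.2 hab)
      (g := ⟨g₀, hg₁⟩) hg₀ hfix ⟨x, hx⟩
  have hsub : (G₁ : Set ℝ) ⊆ G₂ := fun x hx => hφ_eq x hx ▸ hmaps hx
  refine ⟨⟨hsub, hφ_eq⟩, fun hsurj => le_antisymm hsub fun y hy => ?_⟩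
  obtain ⟨x, hx, rfl⟩ := hsurj hy
  rwa [hφ_eq x hx]

/-- If `G₁, G₂` are subgroups of `(ℝ,+)` containing a common nonzero
element `g₀` and `φ : G₁ → G₂` is an injective order-preserving group homomorphism
with `φ(g₀) = g₀`, then `G₁ ⊆ G₂` and `φ` is the inclusion; if `φ` is moreover
surjective onto `G₂`, then `G₁ = G₂`. -/
theorem subgroups_of_real_hom_eq
    (G₁ G₂ : AddSubgroup ℝ) (g₀ : ℝ) (hg₀ : g₀ ≠ 0)
    (hg₁ : g₀ ∈ G₁) (hg₂ : g₀ ∈ G₂)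
    (φ : ℝ → ℝ)
    (hmaps : Set.MapsTo φ (G₁ : Set ℝ) (G₂ : Set ℝ))
    (hadd : ∀ x ∈ G₁, ∀ y ∈ G₁, φ (x + y) = φ x + φ y)
    (hmono : ∀ x ∈ G₁, ∀ y ∈ G₁, x ≤ y → φ x ≤ φ y)
    (hinj : Set.InjOn φ (G₁ : Set ℝ))
    (hfix : φ g₀ = g₀) :
    ((G₁ : Set ℝ) ⊆ (G₂ : Set ℝ) ∧ ∀ x ∈ G₁, φ x = x) ∧
    (Set.SurjOn φ (G₁ : Set ℝ) (G₂ : Set ℝ) → G₁ = G₂) :=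
  subgroups_of_real_hom_eq_general G₁ G₂ g₀ hg₀ hg₁ φ hmaps hadd hmono hfix
end

section
/- Let (R, 1_R) be a unital Riesz space such that every strictly positive element of R is a strong unit. Then (R, 1_R) is isomorphic as a unital Riesz space to (ℝ, 1). -/
/-!
The hypothesis says precisely that `R` is `Archimedean` in Mathlib's sense, which for a
partial order is the strong-unit condition. Fix `u > 0` and, for `r : R`, let `c` be the
infimum of the `t` with `r ≤ t • u`. Since `(r - c • u)⁺ ≤ ε • u` for every `ε > 0`, and a
strictly positive element dominates some `δ • u` with `δ > 0`, that positive part vanishes,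
so `r ≤ c • u`; the same domination applied to `c • u - r` contradicts the minimality of `c`
unless `c • u = r`. Hence `t ↦ t • u` is a linear bijection `ℝ → R` reflecting the order.
-/

section RealMultiples

-- Over a field, `t ↦ t • u` is strictly monotone for `u > 0`; this yields
-- `smul_le_smul_iff_of_pos_right`.
attribute [local instance] SMulPosMono.toSMulPosStrictMono

section OrderedModule

variable {R : Type*} [AddCommGroup R] [PartialOrder R] [IsOrderedAddMonoid R] [Module ℝ R]
  [PosSMulMono ℝ R] [Archimedean R] {u z : R}

theorem exists_pos_smul_le (hz : 0 < z) (x : R) : ∃ δ : ℝ, 0 < δ ∧ δ • x ≤ z := by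
  obtain ⟨n, hn⟩ := Archimedean.arch x hz
  have hn₀ : (0 : ℝ) < n + 1 := by positivity
  refine ⟨(n + 1 : ℝ)⁻¹, inv_pos.2 hn₀, ?_⟩
  calc (n + 1 : ℝ)⁻¹ • x ≤ (n + 1 : ℝ)⁻¹ • ((n + 1 : ℝ) • z) := by
        refine smul_le_smul_of_nonneg_left ?_ (inv_nonneg.2 hn₀.le)
        rw [add_smul, one_smul, Nat.cast_smul_eq_nsmul]
        exact hn.trans (le_add_of_nonneg_right hz.le)
    _ = z := by rw [smul_smul, inv_mul_cancel₀ hn₀.ne', one_smul]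

theorem eq_zero_of_forall_le_smul (hu : 0 < u) (hz : 0 ≤ z) (h : ∀ ε : ℝ, 0 < ε → z ≤ ε • u) :
    z = 0 := by
  by_contra hz₀
  obtain ⟨δ, hδ, hδz⟩ := exists_pos_smul_le (hz.lt_of_ne' hz₀) u
  have : δ • u ≤ (δ / 2) • u := hδz.trans (h _ (half_pos hδ))
  linarith [(smul_le_smul_iff_of_pos_right hu).1 this]

theorem bddBelow_setOf_le_smul (hu : 0 < u) (r : R) : BddBelow {t : ℝ | r ≤ t • u} := by
  obtain ⟨n, hn⟩ := Archimedean.arch (-r) hu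
  refine ⟨-n, fun t ht => (smul_le_smul_iff_of_pos_right hu).1 ?_⟩
  rw [neg_smul, Nat.cast_smul_eq_nsmul, neg_le]
  exact (neg_le_neg ht).trans hn

end OrderedModule

variable {R : Type*} [Lattice R] [AddCommGroup R] [IsOrderedAddMonoid R] [Module ℝ R]
  [PosSMulMono ℝ R] [Archimedean R] {u : R}

theorem le_zero_of_forall_le_smul (hu : 0 < u) {x : R} (h : ∀ ε : ℝ, 0 < ε → x ≤ ε • u) :
    x ≤ 0 := by
  rw [← posPart_eq_zero]
  refine eq_zero_of_forall_le_smul hu (posPart_nonneg x) fun ε hε => ?_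
  exact sup_le (h ε hε) (smul_nonneg hε.le hu.le)

theorem exists_smul_eq_of_pos (hu : 0 < u) (r : R) : ∃ t : ℝ, t • u = r := by
  set S := {t : ℝ | r ≤ t • u}
  have hS : S.Nonempty := by
    obtain ⟨n, hn⟩ := Archimedean.arch r hu
    exact ⟨n, by rwa [Set.mem_ofPred_eq, Nat.cast_smul_eq_nsmul]⟩
  have hbdd := bddBelow_setOf_le_smul hu r
  have h_le : r ≤ sInf S • u := by
    rw [← sub_nonpos]
    refine le_zero_of_forall_le_smul hu fun ε hε => ?_
    obtain ⟨t, ht, htε⟩ := exists_lt_of_csInf_lt hS (lt_add_of_pos_right (sInf S) hε)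
    rw [sub_le_iff_le_add', ← add_smul]
    exact ht.trans ((smul_le_smul_iff_of_pos_right hu).2 htε.le)
  refine ⟨sInf S, le_antisymm ?_ h_le⟩
  by_contra hne
  obtain ⟨δ, hδ, hδle⟩ := exists_pos_smul_le (sub_pos.2 (h_le.lt_of_not_ge hne)) u
  have : sInf S ≤ sInf S - δ := csInf_le hbdd <| by
    rw [Set.mem_ofPred_eq, sub_smul, le_sub_comm]
    exact hδle
  linarith

theorem exists_linearEquiv_real_of_pos (hu : 0 < u) :
    ∃ f : R ≃ₗ[ℝ] ℝ, (∀ x y : R, x ≤ y ↔ f x ≤ f y) ∧ f u = 1 := by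
  let e : ℝ ≃ₗ[ℝ] R :=
    .ofBijective (LinearMap.toSpanSingleton ℝ R u)
      ⟨smul_left_injective ℝ hu.ne', exists_smul_eq_of_pos hu⟩
  have he (x : R) : e.symm x • u = x := e.apply_symm_apply x
  refine ⟨e.symm, fun x y => ?_, e.symm_apply_eq.2 (one_smul ℝ u).symm⟩
  conv_lhs => rw [← he x, ← he y]
  exact smul_le_smul_iff_of_pos_right hu

end RealMultiples

theorem unital_riesz_space_simple_iso_real_general
    {R : Type*}
    [Lattice R] [AddCommGroup R] [CovariantClass R R (· + ·) (· ≤ ·)]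
    [Module ℝ R] [PosSMulMono ℝ R]
    (oneR : R) (honeR : 0 < oneR)
    (hRsimple : ∀ e : R, 0 < e → ∀ r : R, ∃ n : ℕ, 1 ≤ n ∧ r ≤ n • e) :
    ∃ f : R ≃ₗ[ℝ] ℝ, (∀ x y : R, x ≤ y ↔ f x ≤ f y) ∧ f oneR = 1 := by
  have : IsOrderedAddMonoid R := { add_le_add_left := fun _ _ h c => add_le_add_left h c }
  have : Archimedean R := ⟨fun r _ he => (hRsimple _ he r).imp fun _ => And.right⟩
  exact exists_linearEquiv_real_of_pos honeR

/-- A unital Riesz space `(R,1_R)` in which every strictly positive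
element is a strong unit is isomorphic, as a unital Riesz space (a linear order
isomorphism), to `(ℝ, 1)`. -/
theorem unital_riesz_space_simple_iso_real
    {R : Type*}
    [Lattice R] [AddCommGroup R] [CovariantClass R R (· + ·) (· ≤ ·)]
    [Module ℝ R] [PosSMulMono ℝ R]
    (oneR : R) (honeR : 0 < oneR)
    (hRstrong : ∀ r : R, ∃ n : ℕ, 1 ≤ n ∧ r ≤ n • oneR)
    (hRsimple : ∀ e : R, 0 < e → ∀ r : R, ∃ n : ℕ, 1 ≤ n ∧ r ≤ n • e) :
    ∃ f : R ≃ₗ[ℝ] ℝ, (∀ x y : R, x ≤ y ↔ f x ≤ f y) ∧ f oneR = 1 :=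
  unital_riesz_space_simple_iso_real_general oneR honeR hRsimple
end

section
/- Every MV-algebra homomorphism s from Γ(ℝⁿ, 1) to Γ(ℝᵐ, 1) is of the form s(x₁,...,xₙ) = (x_{τ(1)}, ..., x_{τ(m)}) for a unique function τ : {1,...,m} → {1,...,n}. Consequently there are exactly nᵐ such homomorphisms. -/
/-- The MV-algebra `Γ(ℝᵏ, 1) = [0,1]ᵏ`. -/
def Cube (k : ℕ) : Type := {x : Fin k → ℝ // ∀ i, 0 ≤ x i ∧ x i ≤ 1}

namespace Cube

/-- MV-sum `x ⊕ y = (x + y) ∧ 1`, coordinatewise. -/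
def oplus {k : ℕ} (x y : Cube k) : Cube k :=
  ⟨fun i => min (x.1 i + y.1 i) 1, fun i =>
    ⟨le_min (add_nonneg (x.2 i).1 (y.2 i).1) zero_le_one, min_le_right _ _⟩⟩

/-- MV-negation `¬x = 1 - x`, coordinatewise. -/
def compl {k : ℕ} (x : Cube k) : Cube k :=
  ⟨fun i => 1 - x.1 i, fun i => ⟨by simp only []; linarith [(x.2 i).2], by simp only []; linarith [(x.2 i).1]⟩⟩

/-- The bottom element. -/
def bot (k : ℕ) : Cube k := ⟨fun _ => 0, fun _ => ⟨le_refl _, zero_le_one⟩⟩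

/-- The top element. -/
def top (k : ℕ) : Cube k := ⟨fun _ => 1, fun _ => ⟨zero_le_one, le_refl _⟩⟩

end Cube

/-- An MV-algebra homomorphism `Γ(ℝⁿ,1) → Γ(ℝᵐ,1)`. -/
def IsMVHom {n m : ℕ} (s : Cube n → Cube m) : Prop :=
  s (Cube.bot n) = Cube.bot m ∧ s (Cube.top n) = Cube.top m ∧
  (∀ x y, s (x.oplus y) = (s x).oplus (s y)) ∧
  (∀ x, s x.compl = (s x).compl)

/-!
Each coordinate `f` of a homomorphism is an MV-homomorphism `[0,1]ⁿ → [0,1]`. It is additive on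
pairs with coordinatewise sum at most `1`, hence monotone, and subadditive in general. The atoms
`eᵢ` are idempotent, so `f eᵢ ∈ {0, 1}`, and since `1 = f (⊕ᵢ eᵢ) ≤ ∑ᵢ f eᵢ` some `f eᵢ₀ = 1`.
Along the axis `i₀` the map `t ↦ f (t eᵢ₀)` is nonnegative, additive and sends `1` to `1`, hence is
the identity. Monotonicity then gives `f x ≥ f (xᵢ₀ eᵢ₀) = xᵢ₀`, and the same bound for `¬x` gives
`f x ≤ xᵢ₀`.
-/

open Set Finset

theorem map_natCast_mul_of_map_add {g : ℝ → ℝ}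
    (map_add : ∀ a b, 0 ≤ a → 0 ≤ b → a + b ≤ 1 → g (a + b) = g a + g b) (k : ℕ) {u : ℝ}
    (hu : 0 ≤ u) (hk : k * u ≤ 1) : g (k * u) = k * g u := by
  induction k with
  | zero =>
    have h := map_add 0 0 le_rfl le_rfl (by norm_num)
    rw [add_zero] at h
    simp only [Nat.cast_zero, zero_mul]
    linarith
  | succ k ih =>
    push_cast at hk ⊢
    rw [add_one_mul, map_add _ _ (by positivity) hu (by linarith), ih (by linarith), add_one_mul]

theorem le_apply_of_nonneg_of_map_add {g : ℝ → ℝ} (nonneg : ∀ t ∈ Icc (0 : ℝ) 1, 0 ≤ g t)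
    (map_add : ∀ a b, 0 ≤ a → 0 ≤ b → a + b ≤ 1 → g (a + b) = g a + g b) (map_one : g 1 = 1)
    {t : ℝ} (ht : t ∈ Icc (0 : ℝ) 1) : t ≤ g t := by
  refine le_of_forall_pos_lt_add fun ε hε => ?_
  obtain ⟨N, hN⟩ := exists_nat_one_div_lt hε
  have hN_pos : (0 : ℝ) < N + 1 := by positivity
  set u : ℝ := 1 / (N + 1)
  have hu : 0 ≤ u := by positivity
  -- `⌊(N+1) t⌋` steps of length `u` fit below `t`, and each step has `g`-size `u`
  set k := ⌊(N + 1) * t⌋₊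
  have hgu : g u = u := by
    have h := map_natCast_mul_of_map_add map_add (N + 1) hu (by simp [u, hN_pos.ne'])
    push_cast at h
    rw [mul_one_div_cancel hN_pos.ne', map_one] at h
    refine mul_left_cancel₀ hN_pos.ne' ?_
    rw [← h, mul_one_div_cancel hN_pos.ne']
  have hku : 0 ≤ k * u := by positivity
  have hk_le : k * u ≤ t := by
    rw [mul_one_div, div_le_iff₀ hN_pos, mul_comm]
    exact Nat.floor_le (mul_nonneg hN_pos.le ht.1)
  have hk_gt : t < k * u + u := by
    rw [← add_one_mul, mul_one_div, lt_div_iff₀ hN_pos, mul_comm]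
    exact Nat.lt_floor_add_one _
  have hsplit := map_add (k * u) (t - k * u) hku (by linarith) (by linarith [ht.2])
  rw [add_sub_cancel] at hsplit
  calc t < k * u + u := hk_gt
    _ = g (k * u) + u := by
      rw [map_natCast_mul_of_map_add map_add k hu (hk_le.trans ht.2), hgu]
    _ ≤ g t + ε := by linarith [nonneg (t - k * u) ⟨by linarith, by linarith [ht.2]⟩]

theorem eqOn_id_of_nonneg_of_map_add {g : ℝ → ℝ} (nonneg : ∀ t ∈ Icc (0 : ℝ) 1, 0 ≤ g t)
    (map_add : ∀ a b, 0 ≤ a → 0 ≤ b → a + b ≤ 1 → g (a + b) = g a + g b) (map_one : g 1 = 1) :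
    EqOn g id (Icc 0 1) := by
  rintro t ⟨ht0, ht1⟩
  have hsum := map_add t (1 - t) ht0 (by linarith) (by linarith)
  rw [add_sub_cancel, map_one] at hsum
  -- the lower bound `s ≤ g s` at `s = 1 - t` is an upper bound at `t`, since `g t + g (1 - t) = 1`
  have hle := le_apply_of_nonneg_of_map_add nonneg map_add map_one (t := t) ⟨ht0, ht1⟩
  have hle' := le_apply_of_nonneg_of_map_add nonneg map_add map_one (t := 1 - t)
    ⟨by linarith, by linarith⟩
  rw [id_eq]
  linarith

namespace Cube

variable {n : ℕ}

theorem ext {x y : Cube n} (h : ∀ i, x.1 i = y.1 i) : x = y :=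
  Subtype.ext (funext h)

noncomputable def single (i : Fin n) (t : ℝ) : Cube n :=
  ⟨Pi.single i (projIcc 0 1 zero_le_one t : ℝ), fun k => by
    rcases eq_or_ne k i with rfl | hk
    · rw [Pi.single_eq_same]
      exact (projIcc 0 1 zero_le_one t).2
    · simp [hk]⟩

theorem single_apply {i : Fin n} {t : ℝ} (ht : t ∈ Icc (0 : ℝ) 1) (k : Fin n) :
    (single i t).1 k = (Pi.single i t : Fin n → ℝ) k := by
  simp [single, projIcc_of_mem zero_le_one ht]

theorem single_one_oplus_self (i : Fin n) : (single i 1).oplus (single i 1) = single i 1 :=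
  ext fun k => by
    rw [oplus]
    simp only [single_apply (right_mem_Icc.2 zero_le_one), Pi.single_apply]
    split_ifs <;> norm_num

theorem single_add {i : Fin n} {a b : ℝ} (ha : 0 ≤ a) (hb : 0 ≤ b) (hab : a + b ≤ 1) :
    single i (a + b) = (single i a).oplus (single i b) :=
  ext fun k => by
    rw [oplus]
    simp only [single_apply (⟨ha, by linarith⟩ : a ∈ Icc (0 : ℝ) 1),
      single_apply (⟨hb, by linarith⟩ : b ∈ Icc (0 : ℝ) 1),
      single_apply (⟨by linarith, hab⟩ : a + b ∈ Icc (0 : ℝ) 1), Pi.single_apply]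
    split_ifs
    · exact (min_eq_left hab).symm
    · norm_num

def indicator (S : Finset (Fin n)) : Cube n :=
  ⟨fun k => if k ∈ S then 1 else 0, fun k => by dsimp only; split_ifs <;> norm_num⟩

theorem indicator_univ : indicator (univ : Finset (Fin n)) = top n :=
  ext fun k => by simp [indicator, top]

theorem indicator_insert (i : Fin n) (S : Finset (Fin n)) :
    indicator (insert i S) = (single i 1).oplus (indicator S) :=
  ext fun k => by
    rw [oplus]
    simp only [indicator, single_apply (right_mem_Icc.2 zero_le_one), Pi.single_apply,
      Finset.mem_insert]
    split_ifs <;> simp_all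

theorem eq_of_forall_apply_eq {i i' : Fin n} (h : ∀ x : Cube n, x.1 i = x.1 i') : i = i' := by
  by_contra hne
  have := h (single i 1)
  simp [single_apply (right_mem_Icc.2 zero_le_one), Ne.symm hne] at this

def reindex {m : ℕ} (τ : Fin m → Fin n) (x : Cube n) : Cube m :=
  ⟨fun j => x.1 (τ j), fun j => x.2 (τ j)⟩

end Cube

theorem isMVHom_reindex {n m : ℕ} (τ : Fin m → Fin n) : IsMVHom (Cube.reindex τ) :=
  ⟨rfl, rfl, fun _ _ => rfl, fun _ => rfl⟩

structure IsMVHomToUnitInterval {n : ℕ} (f : Cube n → ℝ) : Prop where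
  nonneg : ∀ x, 0 ≤ f x
  map_top : f (Cube.top n) = 1
  map_oplus : ∀ x y, f (x.oplus y) = min (f x + f y) 1
  map_compl : ∀ x, f x.compl = 1 - f x

namespace IsMVHomToUnitInterval

open Cube

variable {n : ℕ} {f : Cube n → ℝ}

theorem map_oplus_of_le_one (hf : IsMVHomToUnitInterval f) {x y : Cube n}
    (h : ∀ i, x.1 i + y.1 i ≤ 1) : f (x.oplus y) = f x + f y := by
  -- `¬x ⊕ ¬y = 1` forces `f x + f y ≤ 1`, so the truncation in `f (x ⊕ y)` is inactive
  have htop : x.compl.oplus y.compl = top n :=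
    ext fun i => min_eq_right (by simp only [Cube.compl]; linarith [h i])
  have hle : f x + f y ≤ 1 := by
    have := hf.map_oplus x.compl y.compl
    rw [htop, hf.map_top, hf.map_compl, hf.map_compl] at this
    by_contra! hlt
    rw [min_eq_left (by linarith)] at this
    linarith
  rw [hf.map_oplus, min_eq_left hle]

theorem mono (hf : IsMVHomToUnitInterval f) {x y : Cube n} (h : ∀ i, x.1 i ≤ y.1 i) :
    f x ≤ f y := by
  let d : Cube n := ⟨fun i => y.1 i - x.1 i, fun i =>
    ⟨by linarith [h i], by linarith [(x.2 i).1, (y.2 i).2]⟩⟩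
  have hy : x.oplus d = y := ext fun i => by
    simp only [oplus, d, add_sub_cancel]
    exact min_eq_left (y.2 i).2
  have := hf.map_oplus_of_le_one (x := x) (y := d) fun i => by
    simp only [d, add_sub_cancel]
    exact (y.2 i).2
  rw [hy] at this
  linarith [hf.nonneg d]

theorem map_indicator_le (hf : IsMVHomToUnitInterval f) (S : Finset (Fin n)) :
    f (indicator S) ≤ ∑ i ∈ S, f (single i 1) := by
  classical
  induction S using Finset.induction_on with
  | empty =>
    have h : indicator (∅ : Finset (Fin n)) = (top n).compl :=
      ext fun k => by simp [Cube.indicator, Cube.top, Cube.compl]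
    rw [h, hf.map_compl, hf.map_top, sub_self, sum_empty]
  | insert i S hiS ih =>
    rw [indicator_insert, hf.map_oplus, sum_insert hiS]
    exact (min_le_left _ _).trans (by linarith)

theorem map_eq_zero_or_one_of_oplus_self (hf : IsMVHomToUnitInterval f) {x : Cube n}
    (hx : x.oplus x = x) : f x = 0 ∨ f x = 1 := by
  have h := hf.map_oplus x x
  rw [hx] at h
  rcases le_total (f x + f x) 1 with hle | hle
  · rw [min_eq_left hle] at h
    left; linarith
  · rw [min_eq_right hle] at h
    right; exact h

theorem exists_map_single_one (hf : IsMVHomToUnitInterval f) : ∃ i, f (single i 1) = 1 := by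
  have hsum : ∑ i, f (single i 1) ≠ 0 := by
    have := hf.map_indicator_le univ
    rw [indicator_univ, hf.map_top] at this
    linarith
  obtain ⟨i, -, hi⟩ := exists_ne_zero_of_sum_ne_zero hsum
  exact ⟨i, (hf.map_eq_zero_or_one_of_oplus_self (single_one_oplus_self i)).resolve_left hi⟩

theorem map_single (hf : IsMVHomToUnitInterval f) {i : Fin n} (hi : f (single i 1) = 1) {t : ℝ}
    (ht : t ∈ Icc (0 : ℝ) 1) : f (single i t) = t := by
  refine eqOn_id_of_nonneg_of_map_add (g := fun s => f (single i s)) (fun t _ => hf.nonneg _)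
    (fun a b ha hb hab => ?_) hi ht
  rw [single_add ha hb hab, hf.map_oplus_of_le_one fun k => ?_]
  rw [single_apply ⟨ha, by linarith⟩, single_apply ⟨hb, by linarith⟩, Pi.single_apply,
    Pi.single_apply]
  split_ifs
  · exact hab
  · norm_num

theorem eq_apply (hf : IsMVHomToUnitInterval f) {i : Fin n} (hi : f (single i 1) = 1)
    (x : Cube n) : f x = x.1 i := by
  have le_map : ∀ y : Cube n, y.1 i ≤ f y := fun y => by
    have hle : f (single i (y.1 i)) ≤ f y := hf.mono fun k => by
      rw [single_apply (y.2 i), Pi.single_apply]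
      split_ifs with hk
      · rw [hk]
      · exact (y.2 k).1
    rwa [hf.map_single hi (y.2 i)] at hle
  have hcompl : 1 - x.1 i ≤ 1 - f x := hf.map_compl x ▸ le_map x.compl
  linarith [le_map x]

theorem existsUnique_eq_apply (hf : IsMVHomToUnitInterval f) : ∃! i, ∀ x, f x = x.1 i := by
  obtain ⟨i, hi⟩ := hf.exists_map_single_one
  exact ⟨i, hf.eq_apply hi, fun i' hi' => eq_of_forall_apply_eq fun x => by
    rw [← hi', hf.eq_apply hi]⟩

end IsMVHomToUnitInterval

theorem IsMVHom.coord {n m : ℕ} {s : Cube n → Cube m} (hs : IsMVHom s) (j : Fin m) :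
    IsMVHomToUnitInterval fun x => (s x).1 j where
  nonneg x := ((s x).2 j).1
  map_top := by simp only [hs.2.1]; rfl
  map_oplus x y := by simp only [hs.2.2.1]; rfl
  map_compl x := by simp only [hs.2.2.2]; rfl

theorem IsMVHom.existsUnique_reindex {n m : ℕ} {s : Cube n → Cube m} (hs : IsMVHom s) :
    ∃! τ : Fin m → Fin n, ∀ (x : Cube n) (j : Fin m), (s x).1 j = x.1 (τ j) := by
  choose τ hτ huniq using fun j => (hs.coord j).existsUnique_eq_apply
  exact ⟨τ, fun x j => hτ j x, fun τ' hτ' => funext fun j => huniq j _ fun x => hτ' x j⟩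

/-- Every MV-algebra homomorphism `Γ(ℝⁿ,1) → Γ(ℝᵐ,1)` is of the form
`s(x₁,…,xₙ) = (x_{τ(1)},…,x_{τ(m)})` for a unique `τ : {1,…,m} → {1,…,n}`;
consequently there are exactly `nᵐ` such homomorphisms. -/
theorem mv_hom_cube_classification (n m : ℕ) :
    (∀ s : Cube n → Cube m, IsMVHom s →
      ∃! τ : Fin m → Fin n, ∀ (x : Cube n) (j : Fin m), (s x).1 j = x.1 (τ j)) ∧
    Nat.card {s : Cube n → Cube m // IsMVHom s} = n ^ m := by
  refine ⟨fun s hs => hs.existsUnique_reindex, ?_⟩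
  let toHom (τ : Fin m → Fin n) : {s : Cube n → Cube m // IsMVHom s} :=
    ⟨Cube.reindex τ, isMVHom_reindex τ⟩
  have hbij : Function.Bijective toHom := by
    refine ⟨fun τ τ' h => funext fun j => Cube.eq_of_forall_apply_eq fun x => ?_, ?_⟩
    · exact congrArg (fun s : {s : Cube n → Cube m // IsMVHom s} => (s.1 x).1 j) h
    · rintro ⟨s, hs⟩
      obtain ⟨τ, hτ, -⟩ := hs.existsUnique_reindex
      exact ⟨τ, Subtype.ext <| funext fun x => Cube.ext fun j => (hτ x j).symm⟩
  rw [← Nat.card_eq_of_bijective toHom hbij, Nat.card_fun, Nat.card_fin, Nat.card_fin]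
end

section
/- Let G be a directed abelian partially ordered group with the Riesz decomposition property, R a Dedekind complete Riesz space, and d : G⁺ → R a subadditive map (d(0) = 0, d(x+y) ≤ d(x) + d(y)) such that for each x ∈ G⁺ the set D(x) = {d(x₁)+...+d(xₙ) : x = x₁+...+xₙ, xᵢ ∈ G⁺} is bounded above in R. Then the map m(x) := sup D(x) is additive on G⁺: m(x+y) = m(x) + m(y). -/
/-!
Refining a decomposition `x + y = z₁ + ⋯ + zₙ` into positive pieces by repeated Riesz
decomposition gives `zᵢ = xᵢ + yᵢ` with `∑ xᵢ = x` and `∑ yᵢ = y`, so by subadditivity every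
element of `D(x + y)` is dominated by an element of `D(x) + D(y)`. Conversely, concatenating
decompositions gives `D(x) + D(y) ⊆ D(x + y)`. Hence `D(x + y)` and `D(x) + D(y)` have the same
supremum, and `sup (D(x) + D(y)) = sup D(x) + sup D(y)` in a conditionally complete group.
-/

open scoped Pointwise

def HasRieszDecomposition (G : Type*) [AddCommMonoid G] [PartialOrder G] : Prop :=
  ∀ x₁ x₂ y₁ y₂ : G, 0 ≤ x₁ → 0 ≤ x₂ → 0 ≤ y₁ → 0 ≤ y₂ → x₁ + x₂ = y₁ + y₂ →
    ∃ c₁₁ c₁₂ c₂₁ c₂₂ : G, 0 ≤ c₁₁ ∧ 0 ≤ c₁₂ ∧ 0 ≤ c₂₁ ∧ 0 ≤ c₂₂ ∧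
      x₁ = c₁₁ + c₁₂ ∧ x₂ = c₂₁ + c₂₂ ∧ y₁ = c₁₁ + c₂₁ ∧ y₂ = c₁₂ + c₂₂

def decompositionSums {G R : Type*} [AddCommMonoid G] [PartialOrder G] [AddCommMonoid R]
    (d : G → R) (x : G) : Set R :=
  {r | ∃ l : List G, l ≠ [] ∧ (∀ a ∈ l, 0 ≤ a) ∧ l.sum = x ∧ (l.map d).sum = r}

section Decomposition

variable {G R : Type*} [AddCommMonoid G] [PartialOrder G]

theorem HasRieszDecomposition.exists_split_of_add_eq_sum [AddLeftMono G]
    (hG : HasRieszDecomposition G) {l : List G} (hl : ∀ a ∈ l, 0 ≤ a) {x y : G}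
    (hx : 0 ≤ x) (hy : 0 ≤ y) (hxy : x + y = l.sum) :
    ∃ p : List (G × G), (∀ c ∈ p, 0 ≤ c.1 ∧ 0 ≤ c.2) ∧ p.map (fun c ↦ c.1 + c.2) = l ∧
      (p.map Prod.fst).sum = x ∧ (p.map Prod.snd).sum = y := by
  induction l generalizing x y with
  | nil =>
    obtain ⟨rfl, rfl⟩ := (add_eq_zero_iff_of_nonneg hx hy).mp hxy
    exact ⟨[], by simp, rfl, rfl, rfl⟩
  | cons z l ih =>
    rw [List.forall_mem_cons] at hl
    obtain ⟨c₁₁, c₁₂, c₂₁, c₂₂, h₁₁, h₁₂, h₂₁, h₂₂, rfl, rfl, rfl, hl_sum⟩ :=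
      hG x y z l.sum hx hy hl.1 (List.sum_nonneg hl.2) hxy
    obtain ⟨p, hp, rfl, rfl, rfl⟩ := ih hl.2 h₁₂ h₂₂ hl_sum.symm
    exact ⟨(c₁₁, c₂₁) :: p, List.forall_mem_cons.mpr ⟨⟨h₁₁, h₂₁⟩, hp⟩, rfl, by simp, by simp⟩

section Sums

variable [AddCommMonoid R] {d : G → R}

theorem apply_mem_decompositionSums {x : G} (hx : 0 ≤ x) : d x ∈ decompositionSums d x :=
  ⟨[x], List.cons_ne_nil _ _, by simpa using hx, by simp, by simp⟩

theorem add_mem_decompositionSums {x y : G} {r s : R} (hr : r ∈ decompositionSums d x)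
    (hs : s ∈ decompositionSums d y) : r + s ∈ decompositionSums d (x + y) := by
  obtain ⟨lx, hlx_ne, hlx, rfl, rfl⟩ := hr
  obtain ⟨ly, -, hly, rfl, rfl⟩ := hs
  refine ⟨lx ++ ly, by simp [hlx_ne], ?_, List.sum_append, by simp⟩
  simpa [or_imp, forall_and] using ⟨hlx, hly⟩

theorem add_decompositionSums_subset {x y : G} :
    decompositionSums d x + decompositionSums d y ⊆ decompositionSums d (x + y) := by
  rintro _ ⟨r, hr, s, hs, rfl⟩
  exact add_mem_decompositionSums hr hs

end Sums

variable [AddCommMonoid R] [Preorder R] [AddLeftMono R] {d : G → R}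

theorem sum_map_add_le_of_subadditive
    (hsub : ∀ x y : G, 0 ≤ x → 0 ≤ y → d (x + y) ≤ d x + d y)
    {p : List (G × G)} (hp : ∀ c ∈ p, 0 ≤ c.1 ∧ 0 ≤ c.2) :
    ((p.map fun c ↦ c.1 + c.2).map d).sum ≤
      ((p.map Prod.fst).map d).sum + ((p.map Prod.snd).map d).sum := by
  simp only [List.map_map, ← List.sum_map_add]
  exact List.sum_le_sum fun c hc ↦ hsub c.1 c.2 (hp c hc).1 (hp c hc).2

theorem HasRieszDecomposition.exists_le_add_of_mem_decompositionSums [AddLeftMono G]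
    (hG : HasRieszDecomposition G) (hsub : ∀ x y : G, 0 ≤ x → 0 ≤ y → d (x + y) ≤ d x + d y)
    {x y : G} (hx : 0 ≤ x) (hy : 0 ≤ y) {r : R} (hr : r ∈ decompositionSums d (x + y)) :
    ∃ s ∈ decompositionSums d x, ∃ t ∈ decompositionSums d y, r ≤ s + t := by
  obtain ⟨l, hl_ne, hl, hl_sum, rfl⟩ := hr
  obtain ⟨p, hp, rfl, hpx, hpy⟩ := hG.exists_split_of_add_eq_sum hl hx hy hl_sum.symm
  have hp_ne : p ≠ [] := by rintro rfl; exact hl_ne rfl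
  refine ⟨_, ⟨_, by simpa using hp_ne, ?_, hpx, rfl⟩, _, ⟨_, by simpa using hp_ne, ?_, hpy, rfl⟩,
    sum_map_add_le_of_subadditive hsub hp⟩
  · simpa using fun a b hab ↦ (hp _ hab).1
  · simpa using fun a b hab ↦ (hp _ hab).2

end Decomposition

theorem HasRieszDecomposition.sSup_decompositionSums_add {G R : Type*}
    [AddCommMonoid G] [PartialOrder G] [AddLeftMono G]
    [ConditionallyCompleteLattice R] [AddCommGroup R] [AddLeftMono R]
    (hG : HasRieszDecomposition G) {d : G → R}
    (hsub : ∀ x y : G, 0 ≤ x → 0 ≤ y → d (x + y) ≤ d x + d y)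
    (hbdd : ∀ x : G, 0 ≤ x → BddAbove (decompositionSums d x)) {x y : G}
    (hx : 0 ≤ x) (hy : 0 ≤ y) :
    sSup (decompositionSums d (x + y)) =
      sSup (decompositionSums d x) + sSup (decompositionSums d y) := by
  have hne {z : G} (hz : 0 ≤ z) : (decompositionSums d z).Nonempty :=
    ⟨d z, apply_mem_decompositionSums hz⟩
  rw [← csSup_add (hne hx) (hbdd x hx) (hne hy) (hbdd y hy)]
  refine le_antisymm (csSup_le (hne (add_nonneg hx hy)) fun r hr ↦ ?_)
    (csSup_le_csSup (hbdd _ (add_nonneg hx hy)) ((hne hx).add (hne hy))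
      add_decompositionSums_subset)
  obtain ⟨s, hs, t, ht, hrst⟩ := hG.exists_le_add_of_mem_decompositionSums hsub hx hy hr
  exact hrst.trans (le_csSup ((hbdd x hx).add (hbdd y hy)) (Set.add_mem_add hs ht))

theorem sup_of_subadditive_is_additive_general
    {G R : Type*}
    [PartialOrder G] [AddCommGroup G] [CovariantClass G G (· + ·) (· ≤ ·)]
    (hRDP : ∀ x₁ x₂ y₁ y₂ : G, 0 ≤ x₁ → 0 ≤ x₂ → 0 ≤ y₁ → 0 ≤ y₂ →
      x₁ + x₂ = y₁ + y₂ →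
      ∃ c₁₁ c₁₂ c₂₁ c₂₂ : G, 0 ≤ c₁₁ ∧ 0 ≤ c₁₂ ∧ 0 ≤ c₂₁ ∧ 0 ≤ c₂₂ ∧
        x₁ = c₁₁ + c₁₂ ∧ x₂ = c₂₁ + c₂₂ ∧ y₁ = c₁₁ + c₂₁ ∧ y₂ = c₁₂ + c₂₂)
    [ConditionallyCompleteLattice R] [AddCommGroup R]
    [CovariantClass R R (· + ·) (· ≤ ·)]
    (d : G → R)
    (hsub : ∀ x y : G, 0 ≤ x → 0 ≤ y → d (x + y) ≤ d x + d y)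
    (D : G → Set R)
    (hD : ∀ x : G, D x = {r : R | ∃ l : List G, l ≠ [] ∧ (∀ a ∈ l, 0 ≤ a) ∧
      l.sum = x ∧ (l.map d).sum = r})
    (hbdd : ∀ x : G, 0 ≤ x → BddAbove (D x)) :
    ∀ x y : G, 0 ≤ x → 0 ≤ y → sSup (D (x + y)) = sSup (D x) + sSup (D y) := by
  obtain rfl : D = decompositionSums d := funext hD
  exact fun x y hx hy ↦ HasRieszDecomposition.sSup_decompositionSums_add hRDP hsub hbdd hx hy

/-- Let `G` be a directed abelian po-group with the Riesz decomposition
property, `R` a Dedekind complete Riesz space, and `d : G⁺ → R` subadditive with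
each set `D(x)` of decomposition sums bounded above.  Then `m(x) := sup D(x)` is
additive on `G⁺`. -/
theorem sup_of_subadditive_is_additive
    {G R : Type*}
    [PartialOrder G] [AddCommGroup G] [CovariantClass G G (· + ·) (· ≤ ·)]
    (hdir : ∀ a b : G, ∃ c : G, a ≤ c ∧ b ≤ c)
    (hRDP : ∀ x₁ x₂ y₁ y₂ : G, 0 ≤ x₁ → 0 ≤ x₂ → 0 ≤ y₁ → 0 ≤ y₂ →
      x₁ + x₂ = y₁ + y₂ →
      ∃ c₁₁ c₁₂ c₂₁ c₂₂ : G, 0 ≤ c₁₁ ∧ 0 ≤ c₁₂ ∧ 0 ≤ c₂₁ ∧ 0 ≤ c₂₂ ∧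
        x₁ = c₁₁ + c₁₂ ∧ x₂ = c₂₁ + c₂₂ ∧ y₁ = c₁₁ + c₂₁ ∧ y₂ = c₁₂ + c₂₂)
    [ConditionallyCompleteLattice R] [AddCommGroup R]
    [CovariantClass R R (· + ·) (· ≤ ·)]
    [Module ℝ R] [PosSMulMono ℝ R]
    (d : G → R) (hd0 : d 0 = 0)
    (hsub : ∀ x y : G, 0 ≤ x → 0 ≤ y → d (x + y) ≤ d x + d y)
    (D : G → Set R)
    (hD : ∀ x : G, D x = {r : R | ∃ l : List G, l ≠ [] ∧ (∀ a ∈ l, 0 ≤ a) ∧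
      l.sum = x ∧ (l.map d).sum = r})
    (hbdd : ∀ x : G, 0 ≤ x → BddAbove (D x)) :
    ∀ x y : G, 0 ≤ x → 0 ≤ y → sSup (D (x + y)) = sSup (D x) + sSup (D y) :=
  sup_of_subadditive_is_additive_general hRDP d hsub D hD hbdd
end
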